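/- arXiv:2111.14995 — 3 statements merged into one kernel-verified Lean document; each statement's English description precedes it below -/
import Mathlib

section
/- For all a, b, d > 0 and z ∈ [0,1], the function q_a(z) = -a²(a²(1-z²) + b²(1+z²)) / (d²(a²(1-z²) + b²z²)^{3/2}) satisfies min{-(a²+b²)/(a d²), -2a²/(b d²)} ≤ q_a(z) ≤ max{-(a²+b²)/(a d²), -2a²/(b d²)}. -/
/-!
With `w = a² (1 - z²) + b² z²` the numerator is `w + b²`, so `q_a = f w` for
`f w = -a² (w + b²) / (d² w^{3/2})`. Since `(w + b²) / w^{3/2} = w^{-1/2} + b² w^{-3/2}`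
decreases in `w`, `f` is monotone on `(0, ∞)`. As `z` runs over `[0, 1]`, `w` runs over the
segment between `a²` and `b²`, so `q_a` lies between `f (a²) = -(a² + b²) / (a d²)` and
`f (b²) = -2a² / (b d²)`.
-/

open Set Real

lemma antitoneOn_add_div_rpow {c p : ℝ} (hc : 0 ≤ c) (hp : 1 ≤ p) :
    AntitoneOn (fun w : ℝ => (w + c) / w ^ p) (Ioi 0) := by
  have hsplit : ∀ w : ℝ, 0 < w → (w + c) / w ^ p = w ^ (1 - p) + c * (w ^ p)⁻¹ := by
    intro w hw
    rw [add_div, rpow_sub hw, rpow_one, div_eq_mul_inv c]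
  intro u hu v hv huv
  simp only [hsplit u hu, hsplit v hv]
  exact add_le_add (rpow_le_rpow_of_nonpos hu huv (by linarith))
    (mul_le_mul_of_nonneg_left
      (inv_anti₀ (rpow_pos_of_pos hu p) (rpow_le_rpow hu.le huv (by linarith))) hc)

lemma monotoneOn_neg_mul_add_div_rpow {k c m p : ℝ} (hk : 0 ≤ k) (hc : 0 ≤ c) (hm : 0 ≤ m)
    (hp : 1 ≤ p) :
    MonotoneOn (fun w : ℝ => -k * (w + c) / (m * w ^ p)) (Ioi 0) := by
  intro u hu v hv huv
  have hfactor : ∀ w : ℝ, -k * (w + c) / (m * w ^ p) = -(k / m) * ((w + c) / w ^ p) := by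
    intro w
    rw [mul_div_mul_comm, neg_div]
  simp only [hfactor]
  exact mul_le_mul_of_nonpos_left (antitoneOn_add_div_rpow hc hp hu hv huv)
    (neg_nonpos.mpr (div_nonneg hk hm))

lemma sq_rpow_three_halves {x : ℝ} (hx : 0 ≤ x) : (x ^ 2) ^ ((3 : ℝ) / 2) = x ^ 3 := by
  rw [← rpow_natCast x 2, ← rpow_mul hx]
  norm_num

theorem stmt_1_general (a b d z : ℝ) (ha : 0 < a) (hb : 0 < b)
    (hz : z ∈ Set.Icc (0:ℝ) 1) :
    min (-(a ^ 2 + b ^ 2) / (a * d ^ 2)) (-(2 * a ^ 2) / (b * d ^ 2)) ≤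
        -a ^ 2 * (a ^ 2 * (1 - z ^ 2) + b ^ 2 * (1 + z ^ 2)) /
          (d ^ 2 * (a ^ 2 * (1 - z ^ 2) + b ^ 2 * z ^ 2) ^ ((3:ℝ)/2)) ∧
      -a ^ 2 * (a ^ 2 * (1 - z ^ 2) + b ^ 2 * (1 + z ^ 2)) /
          (d ^ 2 * (a ^ 2 * (1 - z ^ 2) + b ^ 2 * z ^ 2) ^ ((3:ℝ)/2)) ≤
        max (-(a ^ 2 + b ^ 2) / (a * d ^ 2)) (-(2 * a ^ 2) / (b * d ^ 2)) := by
  set f : ℝ → ℝ := fun w => -a ^ 2 * (w + b ^ 2) / (d ^ 2 * w ^ ((3 : ℝ) / 2))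
  have hmono : MonotoneOn f (uIcc (a ^ 2) (b ^ 2)) :=
    (monotoneOn_neg_mul_add_div_rpow (sq_nonneg a) (sq_nonneg b) (sq_nonneg d)
      (by norm_num)).mono fun w hw =>
        lt_of_lt_of_le (lt_min (by positivity) (by positivity)) hw.1
  have hw : a ^ 2 * (1 - z ^ 2) + b ^ 2 * z ^ 2 ∈ uIcc (a ^ 2) (b ^ 2) := by
    rw [← segment_eq_uIcc]
    exact ⟨1 - z ^ 2, z ^ 2, by nlinarith [hz.1, hz.2], sq_nonneg z, by ring,
      by simp [mul_comm]⟩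
  have hfa : f (a ^ 2) = -(a ^ 2 + b ^ 2) / (a * d ^ 2) := by
    simp only [f, sq_rpow_three_halves ha.le]
    rw [← mul_div_mul_left _ (a * d ^ 2) (pow_ne_zero 2 ha.ne')]
    ring_nf
  have hfb : f (b ^ 2) = -(2 * a ^ 2) / (b * d ^ 2) := by
    simp only [f, sq_rpow_three_halves hb.le]
    rw [← mul_div_mul_left _ (b * d ^ 2) (pow_ne_zero 2 hb.ne')]
    ring_nf
  have hnum : a ^ 2 * (1 - z ^ 2) + b ^ 2 * (1 + z ^ 2) =
      (a ^ 2 * (1 - z ^ 2) + b ^ 2 * z ^ 2) + b ^ 2 := by ring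
  rw [hnum, ← hfa, ← hfb]
  exact hmono.mapsTo_uIcc hw

theorem stmt_1 (a b d z : ℝ) (ha : 0 < a) (hb : 0 < b) (hd : 0 < d)
    (hz : z ∈ Set.Icc (0:ℝ) 1) :
    min (-(a ^ 2 + b ^ 2) / (a * d ^ 2)) (-(2 * a ^ 2) / (b * d ^ 2)) ≤
        -a ^ 2 * (a ^ 2 * (1 - z ^ 2) + b ^ 2 * (1 + z ^ 2)) /
          (d ^ 2 * (a ^ 2 * (1 - z ^ 2) + b ^ 2 * z ^ 2) ^ ((3:ℝ)/2)) ∧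
      -a ^ 2 * (a ^ 2 * (1 - z ^ 2) + b ^ 2 * (1 + z ^ 2)) /
          (d ^ 2 * (a ^ 2 * (1 - z ^ 2) + b ^ 2 * z ^ 2) ^ ((3:ℝ)/2)) ≤
        max (-(a ^ 2 + b ^ 2) / (a * d ^ 2)) (-(2 * a ^ 2) / (b * d ^ 2)) :=
  stmt_1_general a b d z ha hb hz
end

section
/- Let a, b, d > 0 with a > b, and let 0 < δ with bδ < d and a ≥ √(d²/δ² - b²). Let ξ : [0,1] → [0,1] be the piecewise affine function supported in [α, α+4δ] ⊂ [0,1] that equals 1 on [α+δ, α+3δ], is affine on [α, α+δ] and [α+3δ, α+4δ], and vanishes outside [α, α+4δ]. Then the quadratic form Q_a(ξ) = ∫₀¹ p_a(z) ξ'(z)² + q_a(z) ξ(z)² dz is strictly negative, where p_a(z) = (1-z²)/√(a²(1-z²)+b²z²) and q_a(z) = -a²(a²(1-z²)+b²(1+z²))/(d²(a²(1-z²)+b²z²)^{3/2}). -/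
/-!
On `[0, 1]` one has `p_a ≤ 1/a` and `q_a ≤ -C` with `C = (a² + b²)/(a d²)`, so
`Q_a(ξ) ≤ (1/a) ∫ ξ'² - C ∫ ξ² = 2/(aδ) - 8Cδ/3`. The hypothesis on `a` says `a² + b² ≥ d²/δ²`,
i.e. `C ≥ 1/(aδ²)`, whence `Q_a(ξ) ≤ -2/(3aδ) < 0`.
-/

open Set MeasureTheory intervalIntegral

section Trapezoid

variable {α δ l r : ℝ}

noncomputable def trapezoid (α δ z : ℝ) : ℝ :=
  if z ≤ α then 0
  else if z ≤ α + δ then (z - α) / δ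
  else if z ≤ α + 3 * δ then 1
  else if z ≤ α + 4 * δ then (α + 4 * δ - z) / δ
  else 0

theorem trapezoid_eqOn_Iic : EqOn (trapezoid α δ) (fun _ => 0) (Iic α) := fun _ hz => if_pos hz

theorem trapezoid_eqOn_Ioc_rise :
    EqOn (trapezoid α δ) (fun z => (z - α) / δ) (Ioc α (α + δ)) := fun z hz => by
  simp [trapezoid, not_le.2 hz.1, hz.2]

theorem trapezoid_eqOn_Ioc_top (hδ : 0 ≤ δ) :
    EqOn (trapezoid α δ) (fun _ => 1) (Ioc (α + δ) (α + 3 * δ)) := fun z hz => by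
  have : α < z := by linarith [hz.1]
  simp [trapezoid, not_le.2 hz.1, not_le.2 this, hz.2]

theorem trapezoid_eqOn_Ioc_fall (hδ : 0 ≤ δ) :
    EqOn (trapezoid α δ) (fun z => (α + 4 * δ - z) / δ) (Ioc (α + 3 * δ) (α + 4 * δ)) :=
  fun z hz => by
  have h₁ : α < z := by linarith [hz.1]
  have h₂ : α + δ < z := by linarith [hz.1]
  simp [trapezoid, not_le.2 hz.1, not_le.2 h₁, not_le.2 h₂, hz.2]

theorem trapezoid_eqOn_Ioi (hδ : 0 ≤ δ) : EqOn (trapezoid α δ) (fun _ => 0) (Ioi (α + 4 * δ)) :=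
  fun z hz => by
  have hz : α + 4 * δ < z := hz
  simp [trapezoid, not_le.2 hz, not_le.2 (show α < z by linarith),
    not_le.2 (show α + δ < z by linarith), not_le.2 (show α + 3 * δ < z by linarith)]

theorem intervalIntegrable_and_integral_comp_deriv_of_eqOn_Ioo {f g : ℝ → ℝ} {c u v : ℝ}
    {Φ : ℝ → ℝ → ℝ} (hΦ : Continuous (Function.uncurry Φ)) (huv : u ≤ v)
    (hfg : EqOn f g (Ioo u v)) (hg : ∀ x, HasDerivAt g c x) :
    IntervalIntegrable (fun x => Φ (f x) (deriv f x)) volume u v ∧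
      ∫ x in u..v, Φ (f x) (deriv f x) = ∫ x in u..v, Φ (g x) c := by
  have h : EqOn (fun x => Φ (g x) c) (fun x => Φ (f x) (deriv f x)) (Ioo u v) :=
    fun x hx => by simp only [hfg hx, hfg.deriv isOpen_Ioo hx, (hg x).deriv]
  have hcont : Continuous fun x => Φ (g x) c :=
    hΦ.comp ((continuous_iff_continuousAt.2 fun x => (hg x).continuousAt).prodMk continuous_const)
  exact ⟨(hcont.intervalIntegrable u v).congr_uIoo (uIoo_of_le huv ▸ h),
    (integral_congr_Ioo_of_le huv h).symm⟩

theorem integral_trapezoid_comp_deriv {Φ : ℝ → ℝ → ℝ} (hΦ : Continuous (Function.uncurry Φ))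
    (hδ : 0 < δ) (hl : l ≤ α) (hr : α + 4 * δ ≤ r) :
    IntervalIntegrable (fun z => Φ (trapezoid α δ z) (deriv (trapezoid α δ) z)) volume l r ∧
      ∫ z in l..r, Φ (trapezoid α δ z) (deriv (trapezoid α δ) z) =
        (α - l) * Φ 0 0 + (∫ z in α..α + δ, Φ ((z - α) / δ) (1 / δ)) + 2 * δ * Φ 1 0 +
          (∫ z in α + 3 * δ..α + 4 * δ, Φ ((α + 4 * δ - z) / δ) (-1 / δ)) +
            (r - (α + 4 * δ)) * Φ 0 0 := by
  obtain ⟨i₁, h₁⟩ := intervalIntegrable_and_integral_comp_deriv_of_eqOn_Ioo hΦ hl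
    ((trapezoid_eqOn_Iic (δ := δ)).mono (Ioo_subset_Ioc_self.trans Ioc_subset_Iic_self))
    (fun x => hasDerivAt_const x _)
  obtain ⟨i₂, h₂⟩ := intervalIntegrable_and_integral_comp_deriv_of_eqOn_Ioo hΦ (by linarith)
    ((trapezoid_eqOn_Ioc_rise (α := α) (δ := δ)).mono Ioo_subset_Ioc_self)
    (fun x => ((hasDerivAt_id x).sub_const α).div_const δ)
  obtain ⟨i₃, h₃⟩ := intervalIntegrable_and_integral_comp_deriv_of_eqOn_Ioo hΦ (by linarith)
    ((trapezoid_eqOn_Ioc_top (α := α) hδ.le).mono Ioo_subset_Ioc_self)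
    (fun x => hasDerivAt_const x _)
  obtain ⟨i₄, h₄⟩ := intervalIntegrable_and_integral_comp_deriv_of_eqOn_Ioo hΦ (by linarith)
    ((trapezoid_eqOn_Ioc_fall (α := α) hδ.le).mono Ioo_subset_Ioc_self)
    (fun x => ((hasDerivAt_id x).const_sub (α + 4 * δ)).div_const δ)
  obtain ⟨i₅, h₅⟩ := intervalIntegrable_and_integral_comp_deriv_of_eqOn_Ioo hΦ hr
    ((trapezoid_eqOn_Ioi (α := α) hδ.le).mono Ioo_subset_Ioi_self)
    (fun x => hasDerivAt_const x _)
  refine ⟨i₁.trans (i₂.trans (i₃.trans (i₄.trans i₅))), ?_⟩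
  rw [← integral_add_adjacent_intervals i₁ (i₂.trans (i₃.trans (i₄.trans i₅))),
    ← integral_add_adjacent_intervals i₂ (i₃.trans (i₄.trans i₅)),
    ← integral_add_adjacent_intervals i₃ (i₄.trans i₅),
    ← integral_add_adjacent_intervals i₄ i₅, h₁, h₂, h₃, h₄, h₅]
  simp only [intervalIntegral.integral_const, smul_eq_mul]
  ring

theorem integral_trapezoid_sq (hδ : 0 < δ) (hl : l ≤ α) (hr : α + 4 * δ ≤ r) :
    IntervalIntegrable (fun z => trapezoid α δ z ^ 2) volume l r ∧
      ∫ z in l..r, trapezoid α δ z ^ 2 = 8 * δ / 3 := by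
  obtain ⟨hi, h⟩ := integral_trapezoid_comp_deriv (Φ := fun x _ => x ^ 2) (by fun_prop) hδ hl hr
  refine ⟨hi, h.trans ?_⟩
  rw [integral_comp_sub_right (fun x => (x / δ) ^ 2), integral_comp_sub_left (fun x => (x / δ) ^ 2)]
  simp only [div_pow, intervalIntegral.integral_div, integral_pow]
  field_simp
  ring

theorem integral_deriv_trapezoid_sq (hδ : 0 < δ) (hl : l ≤ α) (hr : α + 4 * δ ≤ r) :
    IntervalIntegrable (fun z => deriv (trapezoid α δ) z ^ 2) volume l r ∧
      ∫ z in l..r, deriv (trapezoid α δ) z ^ 2 = 2 / δ := by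
  obtain ⟨hi, h⟩ := integral_trapezoid_comp_deriv (Φ := fun _ y => y ^ 2) (by fun_prop) hδ hl hr
  refine ⟨hi, h.trans ?_⟩
  simp only [intervalIntegral.integral_const, smul_eq_mul]
  field_simp
  ring

end Trapezoid

section Coefficients

variable {a b d z : ℝ}

noncomputable def pCoeff (a b z : ℝ) : ℝ :=
  (1 - z ^ 2) / Real.sqrt (a ^ 2 * (1 - z ^ 2) + b ^ 2 * z ^ 2)

noncomputable def qCoeff (a b d z : ℝ) : ℝ :=
  -a ^ 2 * (a ^ 2 * (1 - z ^ 2) + b ^ 2 * (1 + z ^ 2)) /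
    (d ^ 2 * (a ^ 2 * (1 - z ^ 2) + b ^ 2 * z ^ 2) ^ ((3:ℝ)/2))

theorem sq_mul_one_sub_sq_add_sq_mul_sq_mem_Icc (hb : 0 ≤ b) (hba : b ≤ a) (hz : z ∈ Icc (0:ℝ) 1) :
    a ^ 2 * (1 - z ^ 2) + b ^ 2 * z ^ 2 ∈ Icc (b ^ 2) (a ^ 2) := by
  have hab : 0 ≤ a ^ 2 - b ^ 2 := by nlinarith
  have hz2 : z ^ 2 ≤ 1 := by nlinarith [hz.1, hz.2]
  constructor <;> nlinarith [mul_nonneg hab (sub_nonneg.2 hz2), mul_nonneg hab (sq_nonneg z)]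

theorem pCoeff_le_one_div (ha : 0 < a) (hz : z ∈ Icc (0:ℝ) 1) : pCoeff a b z ≤ 1 / a := by
  have h1 : 0 ≤ 1 - z ^ 2 := by nlinarith [hz.1, hz.2]
  refine div_le_of_le_mul₀ (Real.sqrt_nonneg _) (by positivity) ?_
  rw [one_div_mul_eq_div, le_div_iff₀ ha, mul_comm, Real.le_sqrt (by positivity) (by positivity)]
  nlinarith [mul_nonneg (mul_nonneg (sq_nonneg a) h1) (sq_nonneg z)]

theorem qCoeff_le_neg (hb : 0 < b) (hba : b ≤ a) (hz : z ∈ Icc (0:ℝ) 1) :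
    qCoeff a b d z ≤ -((a ^ 2 + b ^ 2) / a / d ^ 2) := by
  have ha : 0 < a := hb.trans_le hba
  obtain ⟨hbs, hsa⟩ := sq_mul_one_sub_sq_add_sq_mul_sq_mem_Icc hb.le hba hz
  set s := a ^ 2 * (1 - z ^ 2) + b ^ 2 * z ^ 2
  have hs : 0 < s := (pow_pos hb 2).trans_le hbs
  have ht : 0 < Real.sqrt s := Real.sqrt_pos.2 hs
  have hta : Real.sqrt s ≤ a := Real.sqrt_le_iff.2 ⟨ha.le, hsa⟩
  have hq : qCoeff a b d z = -(a ^ 2 * (s + b ^ 2) / (s * Real.sqrt s) / d ^ 2) := by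
    have hnum : a ^ 2 * (1 - z ^ 2) + b ^ 2 * (1 + z ^ 2) = s + b ^ 2 := by simp only [s]; ring
    rw [qCoeff, hnum, show (3:ℝ) / 2 = 1 + 1 / 2 by norm_num, Real.rpow_add hs, Real.rpow_one,
      ← Real.sqrt_eq_rpow, neg_mul, neg_div, div_div, mul_comm (d ^ 2)]
  rw [hq, neg_le_neg_iff]
  refine div_le_div_of_nonneg_right ?_ (sq_nonneg d)
  rw [div_le_div_iff₀ ha (by positivity)]
  nlinarith [mul_le_mul hsa hta ht.le (sq_nonneg a), mul_le_mul_of_nonneg_left hta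
    (mul_nonneg (sq_nonneg a) hs.le)]

theorem continuousOn_pCoeff (hb : 0 < b) (hba : b ≤ a) :
    ContinuousOn (pCoeff a b) (Icc 0 1) := by
  refine ContinuousOn.div (by fun_prop) (by fun_prop) fun z hz => (Real.sqrt_pos.2 ?_).ne'
  exact (pow_pos hb 2).trans_le (sq_mul_one_sub_sq_add_sq_mul_sq_mem_Icc hb.le hba hz).1

theorem continuousOn_qCoeff (hb : 0 < b) (hba : b ≤ a) (hd : d ≠ 0) :
    ContinuousOn (qCoeff a b d) (Icc 0 1) := by
  refine ContinuousOn.div (by fun_prop) ?_ fun z hz => ?_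
  · exact (continuous_const.mul ((by fun_prop : Continuous fun z : ℝ =>
      a ^ 2 * (1 - z ^ 2) + b ^ 2 * z ^ 2).rpow_const fun _ => Or.inr (by norm_num))).continuousOn
  · have := (pow_pos hb 2).trans_le (sq_mul_one_sub_sq_add_sq_mul_sq_mem_Icc hb.le hba hz).1
    positivity

theorem pCoeff_mul_add_qCoeff_mul_le (hb : 0 < b) (hba : b ≤ a) (hz : z ∈ Icc (0:ℝ) 1)
    (x y : ℝ) :
    pCoeff a b z * y ^ 2 + qCoeff a b d z * x ^ 2 ≤
      1 / a * y ^ 2 - (a ^ 2 + b ^ 2) / a / d ^ 2 * x ^ 2 := by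
  linarith [mul_le_mul_of_nonneg_right (pCoeff_le_one_div (b := b) (hb.trans_le hba) hz)
      (sq_nonneg y),
    mul_le_mul_of_nonneg_right (qCoeff_le_neg (d := d) hb hba hz) (sq_nonneg x)]

end Coefficients

theorem one_div_mul_sq_le_of_sqrt_le {a b d δ : ℝ} (ha : 0 < a) (hd : 0 < d) (hδ : 0 < δ)
    (haδ : Real.sqrt (d ^ 2 / δ ^ 2 - b ^ 2) ≤ a) :
    1 / (a * δ ^ 2) ≤ (a ^ 2 + b ^ 2) / a / d ^ 2 := by
  have h : d ^ 2 / δ ^ 2 ≤ a ^ 2 + b ^ 2 := by linarith [(Real.sqrt_le_iff.1 haδ).2]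
  rw [div_le_iff₀ (by positivity)] at h
  rw [div_div, div_le_div_iff₀ (by positivity) (by positivity)]
  nlinarith

theorem stmt_12_general (a b d δ α : ℝ) (hb : 0 < b) (hba : b < a) (hd : 0 < d)
    (hδ : 0 < δ) (haδ : Real.sqrt (d ^ 2 / δ ^ 2 - b ^ 2) ≤ a)
    (hα : 0 ≤ α) (hα4 : α + 4 * δ ≤ 1)
    (ξ : ℝ → ℝ)
    (hξ : ∀ z : ℝ, ξ z =
      if z ≤ α then 0
      else if z ≤ α + δ then (z - α) / δ
      else if z ≤ α + 3 * δ then 1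
      else if z ≤ α + 4 * δ then (α + 4 * δ - z) / δ
      else 0) :
    (∫ z in (0:ℝ)..1,
        ((1 - z ^ 2) / Real.sqrt (a ^ 2 * (1 - z ^ 2) + b ^ 2 * z ^ 2)) * (deriv ξ z) ^ 2 +
          (-a ^ 2 * (a ^ 2 * (1 - z ^ 2) + b ^ 2 * (1 + z ^ 2)) /
            (d ^ 2 * (a ^ 2 * (1 - z ^ 2) + b ^ 2 * z ^ 2) ^ ((3:ℝ)/2))) * (ξ z) ^ 2) < 0 := by
  obtain rfl : ξ = trapezoid α δ := funext hξ
  have ha : 0 < a := hb.trans hba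
  have hC := one_div_mul_sq_le_of_sqrt_le ha hd hδ haδ
  set C := (a ^ 2 + b ^ 2) / a / d ^ 2
  obtain ⟨hξi, hξ2⟩ := integral_trapezoid_sq hδ hα hα4
  obtain ⟨hξ'i, hξ'2⟩ := integral_deriv_trapezoid_sq hδ hα hα4
  have hQi : IntervalIntegrable (fun z => pCoeff a b z * deriv (trapezoid α δ) z ^ 2 +
      qCoeff a b d z * trapezoid α δ z ^ 2) volume 0 1 := by
    have hI := uIcc_of_le (zero_le_one' ℝ)
    exact (hξ'i.continuousOn_mul (hI ▸ continuousOn_pCoeff hb hba.le)).add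
      (hξi.continuousOn_mul (hI ▸ continuousOn_qCoeff hb hba.le hd.ne'))
  calc _ = ∫ z in (0:ℝ)..1, pCoeff a b z * deriv (trapezoid α δ) z ^ 2 +
        qCoeff a b d z * trapezoid α δ z ^ 2 := rfl
    _ ≤ ∫ z in (0:ℝ)..1, 1 / a * deriv (trapezoid α δ) z ^ 2 - C * trapezoid α δ z ^ 2 :=
      integral_mono_on zero_le_one hQi ((hξ'i.const_mul _).sub (hξi.const_mul _))
        fun z hz => pCoeff_mul_add_qCoeff_mul_le hb hba.le hz _ _
    _ = 1 / a * (2 / δ) - C * (8 * δ / 3) := by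
      rw [integral_sub (hξ'i.const_mul _) (hξi.const_mul _), intervalIntegral.integral_const_mul,
        intervalIntegral.integral_const_mul, hξ'2, hξ2]
    _ ≤ 1 / a * (2 / δ) - 1 / (a * δ ^ 2) * (8 * δ / 3) := by gcongr
    _ = -(2 / (3 * a * δ)) := by field_simp; ring
    _ < 0 := neg_neg_of_pos (by positivity)

/-- The trapezoidal test function `ξ_{α,δ,2δ}` makes the quadratic form
`Q_a(ξ) = ∫₀¹ p_a ξ'² + q_a ξ²` strictly negative, provided `a > b`,
`bδ < d` and `a ≥ √(d²/δ² - b²)`. -/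
theorem stmt_12 (a b d δ α : ℝ) (hb : 0 < b) (hba : b < a) (hd : 0 < d)
    (hδ : 0 < δ) (hbδ : b * δ < d) (haδ : Real.sqrt (d ^ 2 / δ ^ 2 - b ^ 2) ≤ a)
    (hα : 0 ≤ α) (hα4 : α + 4 * δ ≤ 1)
    (ξ : ℝ → ℝ)
    (hξ : ∀ z : ℝ, ξ z =
      if z ≤ α then 0
      else if z ≤ α + δ then (z - α) / δ
      else if z ≤ α + 3 * δ then 1
      else if z ≤ α + 4 * δ then (α + 4 * δ - z) / δ
      else 0) :
    (∫ z in (0:ℝ)..1,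
        ((1 - z ^ 2) / Real.sqrt (a ^ 2 * (1 - z ^ 2) + b ^ 2 * z ^ 2)) * (deriv ξ z) ^ 2 +
          (-a ^ 2 * (a ^ 2 * (1 - z ^ 2) + b ^ 2 * (1 + z ^ 2)) /
            (d ^ 2 * (a ^ 2 * (1 - z ^ 2) + b ^ 2 * z ^ 2) ^ ((3:ℝ)/2))) * (ξ z) ^ 2) < 0 :=
  stmt_12_general a b d δ α hb hba hd hδ haδ hα hα4 ξ hξ
end

section
/- Let y : ℝ → ℝ be continuous and periodic with period Δ > 0, and suppose on each half-open interval [α, α+Δ) the function y has exactly two zeros. If x : [-T,T] → ℝ is continuous with x(0) = 0 and the composite y∘x has at most m zeros on [-T,T] and x is monotone, then |x(t)| ≤ (1 + m/2)Δ for all t ∈ [-T,T]. -/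
/-!
Since `x` is continuous with `x 0 = 0`, the intermediate value theorem makes `x` sweep the whole
interval between `0` and `x t`, so each zero of `y` there is `x s` for some zero `s` of `y ∘ x`.
That interval contains `⌊|x t| / Δ⌋` consecutive periods, hence `2 ⌊|x t| / Δ⌋` zeros of `y`, and
`2 ⌊|x t| / Δ⌋ ≤ m` gives `|x t| < (⌊|x t| / Δ⌋ + 1) Δ ≤ (1 + m / 2) Δ`.
-/

open Set

lemma encard_inter_Ico_add_mul {Δ : ℝ} (hΔ : 0 ≤ Δ) {S : Set ℝ} {k : ℕ∞}
    (hS : ∀ α, (Ico α (α + Δ) ∩ S).encard = k) (N : ℕ) (α : ℝ) :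
    (Ico α (α + N * Δ) ∩ S).encard = N * k := by
  induction N with
  | zero => simp
  | succ n ih =>
    have hsplit :
        Ico α (α + n * Δ) ∪ Ico (α + n * Δ) (α + n * Δ + Δ) = Ico α (α + (n + 1 : ℕ) * Δ) :=
      Ico_union_Ico_eq_Ico (by nlinarith [n.cast_nonneg (α := ℝ)]) (by linarith) |>.trans
        (by push_cast; ring_nf)
    rw [← hsplit, union_inter_distrib_right, encard_union_eq
      (Ico_disjoint_Ico_same.mono inter_subset_left inter_subset_left), ih, hS]
    push_cast
    ring

lemma Ico_min_add_subset_uIcc {a b ℓ : ℝ} (hℓ : ℓ ≤ |b - a|) :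
    Ico (min a b) (min a b + ℓ) ⊆ uIcc a b := by
  rw [← Icc_min_max]
  have : min a b + ℓ ≤ max a b := by linarith [max_sub_min_eq_abs a b]
  exact Ico_subset_Icc_self.trans (Icc_subset_Icc_right this)

lemma encard_uIcc_inter_le_encard_preimage {f : ℝ → ℝ} {a b : ℝ}
    (hf : ContinuousOn f (uIcc a b)) (S : Set ℝ) :
    (uIcc (f a) (f b) ∩ S).encard ≤ (uIcc a b ∩ f ⁻¹' S).encard := by
  have hsub : uIcc (f a) (f b) ∩ S ⊆ f '' (uIcc a b ∩ f ⁻¹' S) := by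
    rintro z ⟨hz, hzS⟩
    obtain ⟨s, hs, rfl⟩ := intermediate_value_uIcc hf hz
    exact ⟨s, ⟨hs, hzS⟩, rfl⟩
  exact (encard_le_encard hsub).trans (encard_image_le _ _)

lemma floor_mul_le_encard_preimage {Δ : ℝ} (hΔ : 0 < Δ) {S : Set ℝ} {k : ℕ∞}
    (hS : ∀ α, (Ico α (α + Δ) ∩ S).encard = k) {f : ℝ → ℝ} {a b : ℝ}
    (hf : ContinuousOn f (uIcc a b)) :
    ⌊|f b - f a| / Δ⌋₊ * k ≤ (uIcc a b ∩ f ⁻¹' S).encard := by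
  have hperiods : ⌊|f b - f a| / Δ⌋₊ * Δ ≤ |f b - f a| :=
    (le_div_iff₀ hΔ).mp (Nat.floor_le (by positivity))
  rw [← encard_inter_Ico_add_mul hΔ.le hS]
  exact (encard_le_encard (inter_subset_inter_left S (Ico_min_add_subset_uIcc hperiods))).trans
    (encard_uIcc_inter_le_encard_preimage hf S)

theorem stmt_18_general (Δ T : ℝ) (hΔ : 0 < Δ) (m : ℕ)
    (y : ℝ → ℝ)
    (hzeros : ∀ α : ℝ, ({t ∈ Set.Ico α (α + Δ) | y t = 0}).encard = 2)
    (x : ℝ → ℝ) (hx : ContinuousOn x (Set.Icc (-T) T)) (hx0 : x 0 = 0)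
    (hfin : ({t ∈ Set.Icc (-T) T | y (x t) = 0}).encard ≤ (m : ℕ∞)) :
    ∀ t ∈ Set.Icc (-T) T, |x t| ≤ (1 + (m : ℝ) / 2) * Δ := by
  intro t ht
  have h0 : (0 : ℝ) ∈ Icc (-T) T := ⟨by linarith [ht.1, ht.2], by linarith [ht.1, ht.2]⟩
  have hsub : uIcc 0 t ⊆ Icc (-T) T := uIcc_subset_Icc h0 ht
  have hzeros_le : (uIcc 0 t ∩ x ⁻¹' {u | y u = 0}).encard ≤ m :=
    (encard_le_encard (inter_subset_inter_left _ hsub)).trans hfin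
  have hcount : ⌊|x t| / Δ⌋₊ * 2 ≤ m := by
    have h := floor_mul_le_encard_preimage hΔ (S := {u | y u = 0}) hzeros (hx.mono hsub)
    rw [hx0, sub_zero] at h
    exact_mod_cast h.trans hzeros_le
  have hfloor : (⌊|x t| / Δ⌋₊ : ℝ) ≤ m / 2 := by
    rw [le_div_iff₀ two_pos]; exact_mod_cast hcount
  have hlt : |x t| < (⌊|x t| / Δ⌋₊ + 1) * Δ := (div_lt_iff₀ hΔ).mp (Nat.lt_floor_add_one _)
  calc |x t| ≤ (⌊|x t| / Δ⌋₊ + 1) * Δ := hlt.le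
    _ ≤ (1 + (m : ℝ) / 2) * Δ := mul_le_mul_of_nonneg_right (by linarith) hΔ.le

/-- Bound on the horizontal displacement: if `y` is `Δ`-periodic with exactly two
zeros in each period, `x` is continuous and monotone on `[-T,T]` with `x(0)=0`, and
`y ∘ x` has at most `m` zeros on `[-T,T]`, then `|x(t)| ≤ (1 + m/2)Δ`. -/
theorem stmt_18 (Δ T : ℝ) (hΔ : 0 < Δ) (hT : 0 < T) (m : ℕ) (hm : 1 ≤ m)
    (y : ℝ → ℝ) (hy : Continuous y)
    (hper : ∀ t : ℝ, y (t + Δ) = y t)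
    (hzeros : ∀ α : ℝ, ({t ∈ Set.Ico α (α + Δ) | y t = 0}).encard = 2)
    (x : ℝ → ℝ) (hx : ContinuousOn x (Set.Icc (-T) T)) (hx0 : x 0 = 0)
    (hmono : MonotoneOn x (Set.Icc (-T) T) ∨ AntitoneOn x (Set.Icc (-T) T))
    (hfin : ({t ∈ Set.Icc (-T) T | y (x t) = 0}).encard ≤ (m : ℕ∞)) :
    ∀ t ∈ Set.Icc (-T) T, |x t| ≤ (1 + (m : ℝ) / 2) * Δ :=
  stmt_18_general Δ T hΔ m y hzeros x hx hx0 hfin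
end
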